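/- Pathwise Lagrange–d'Alembert–Pontryagin principle: let F : ℝⁿ × ℝⁿ → ℝⁿ be continuous (an external force field, F(q,v) regarded as a covector via the Euclidean pairing). A path (q,v,p) satisfies the Lagrange–d'Alembert–Pontryagin principle, i.e. d/dε|_{ε=0} 𝔊(q+εδq, v+εδv, p+εδp) + ∫_a^b ⟨F(q(t),v(t)), δq(t)⟩ dt = 0 for every admissible variation (δq,δv,δp), if and only if q' = v, p(t) = (∂L/∂v)(q(t),v(t)), and p is continuously differentiable with p'(t) = (∂L/∂q)(q(t),v(t)) + F(q(t),v(t)) + Σ_{i=1}^m (∂γ_i/∂q)(q(t)) w_i'(t) for all t ∈ [a,b]. -/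

import Mathlib

open scoped RealInnerProductSpace

/-- The pathwise Hamilton–Pontryagin action
`𝔊(q,v,p) = ∫_a^b [ L(q,v) + ∑_i γ_i(q) w_i' + ⟨p, q' − v⟩ ] dt`,
written as a functional of the path `q`, its derivative `q'`, the velocity `v`
and the momentum `p`. -/
noncomputable def HPaction (a b : ℝ) (n m : ℕ)
    (L : EuclideanSpace ℝ (Fin n) × EuclideanSpace ℝ (Fin n) → ℝ)
    (γ : ℕ → EuclideanSpace ℝ (Fin n) → ℝ) (w' : ℕ → ℝ → ℝ)
    (q q' v p : ℝ → EuclideanSpace ℝ (Fin n)) : ℝ :=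
  ∫ t in a..b,
    (L (q t, v t) + ∑ i ∈ Finset.range m, γ i (q t) * w' i t
      + ⟪p t, q' t - v t⟫)

/-!
Differentiating under the integral sign, the first variation of the action plus the force term is
`∫ ⟪f, δq⟫ + ⟪p, δq'⟫ + ⟪∂L/∂v - p, δv⟫ + ⟪δp, q' - v⟫` with `f = ∂L/∂q + F + ∑ wᵢ' ∇γᵢ`.
The variations `δp = q' - v` and `δv = ∂L/∂v - p` turn the last two terms into squared norms, so
they vanish. What remains is the du Bois-Reymond form of the Euler–Lagrange equation: integrating
`⟪f, δq⟫` by parts against `P = ∫ f` shows that `p - P` is orthogonal to every continuous function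
of mean zero, hence constant, so `p' = f`. Conversely, `p' = f` makes the integrand the derivative
of `⟪p, δq⟫`, which vanishes at both ends.
-/

open Set MeasureTheory Filter Topology intervalIntegral

section Gradient

variable {E F : Type*} [NormedAddCommGroup E] [InnerProductSpace ℝ E]
  [NormedAddCommGroup F] [InnerProductSpace ℝ F] {L : E × F → ℝ}

theorem gradient_partial_fst_eq [CompleteSpace E] {x : E} {y : F}
    (hL : DifferentiableAt ℝ L (x, y)) :
    gradient (fun u => L (u, y)) x
      = (InnerProductSpace.toDual ℝ E).symm ((fderiv ℝ L (x, y)).comp (.inl ℝ E F)) :=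
  congrArg _ (hL.hasFDerivAt.comp x (hasFDerivAt_prodMk_left x y)).fderiv

theorem gradient_partial_snd_eq [CompleteSpace F] {x : E} {y : F}
    (hL : DifferentiableAt ℝ L (x, y)) :
    gradient (fun u => L (x, u)) y
      = (InnerProductSpace.toDual ℝ F).symm ((fderiv ℝ L (x, y)).comp (.inr ℝ E F)) :=
  congrArg _ (hL.hasFDerivAt.comp y (hasFDerivAt_prodMk_right x y)).fderiv

theorem fderiv_apply_eq_inner_gradient_add_inner_gradient [CompleteSpace E] [CompleteSpace F]
    {x : E} {y : F} (hL : DifferentiableAt ℝ L (x, y)) (h : E) (k : F) :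
    fderiv ℝ L (x, y) (h, k)
      = ⟪gradient (fun u => L (u, y)) x, h⟫ + ⟪gradient (fun u => L (x, u)) y, k⟫ := by
  rw [gradient_partial_fst_eq hL, gradient_partial_snd_eq hL,
    InnerProductSpace.toDual_symm_apply, InnerProductSpace.toDual_symm_apply,
    ContinuousLinearMap.comp_apply, ContinuousLinearMap.comp_apply, ← map_add]
  simp

theorem ContDiff.continuous_gradient [CompleteSpace E] {f : E → ℝ} (hf : ContDiff ℝ 1 f) :
    Continuous (gradient f) :=
  (InnerProductSpace.toDual ℝ E).symm.continuous.comp (hf.continuous_fderiv one_ne_zero)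

theorem ContDiff.continuous_gradient_partial_fst [CompleteSpace E] (hL : ContDiff ℝ 1 L) :
    Continuous fun z : E × F => gradient (fun u => L (u, z.2)) z.1 := by
  simp_rw [gradient_partial_fst_eq (hL.differentiable one_ne_zero _)]
  exact (InnerProductSpace.toDual ℝ E).symm.continuous.comp
    ((hL.continuous_fderiv one_ne_zero).clm_comp continuous_const)

theorem ContDiff.continuous_gradient_partial_snd [CompleteSpace F] (hL : ContDiff ℝ 1 L) :
    Continuous fun z : E × F => gradient (fun u => L (z.1, u)) z.2 := by
  simp_rw [gradient_partial_snd_eq (hL.differentiable one_ne_zero _)]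
  exact (InnerProductSpace.toDual ℝ F).symm.continuous.comp
    ((hL.continuous_fderiv one_ne_zero).clm_comp continuous_const)

end Gradient

section Variational

variable {E : Type*} [NormedAddCommGroup E] [InnerProductSpace ℝ E] {a b : ℝ}

theorem ContinuousOn.hasDerivWithinAt_integral_Icc [CompleteSpace E] {f : ℝ → E} (hab : a ≤ b)
    (hf : ContinuousOn f (Icc a b)) {t : ℝ} (ht : t ∈ Icc a b) :
    HasDerivWithinAt (fun u => ∫ s in a..u, f s) (f t) (Icc a b) t := by
  set g := IccExtend hab ((Icc a b).domRestrict f)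
  have hg : Continuous g := hf.domRestrict.Icc_extend'
  have hgf : EqOn g f (Icc a b) := fun s hs => IccExtend_of_mem hab _ hs
  have hfg : ∀ u ∈ Icc a b, ∫ s in a..u, f s = ∫ s in a..u, g s := fun u hu =>
    integral_congr fun s hs => (hgf (uIcc_subset_Icc (left_mem_Icc.2 hab) hu hs)).symm
  exact ((hg.integral_hasStrictDerivAt a t).hasDerivAt.hasDerivWithinAt.congr hfg
    (hfg t ht)).congr_deriv (hgf ht)

theorem integral_deriv_inner_eq_sub (hab : a ≤ b) {u u' δ δ' : ℝ → E}
    (hu : ∀ t ∈ Icc a b, HasDerivWithinAt u (u' t) (Icc a b) t)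
    (hu' : ContinuousOn u' (Icc a b))
    (hδ : ∀ t ∈ Icc a b, HasDerivWithinAt δ (δ' t) (Icc a b) t)
    (hδ' : ContinuousOn δ' (Icc a b)) :
    ∫ t in a..b, (⟪u' t, δ t⟫ + ⟪u t, δ' t⟫) = ⟪u b, δ b⟫ - ⟪u a, δ a⟫ := by
  have huc : ContinuousOn u (Icc a b) := fun t ht => (hu t ht).continuousWithinAt
  have hδc : ContinuousOn δ (Icc a b) := fun t ht => (hδ t ht).continuousWithinAt
  have hint : ContinuousOn (fun t => ⟪u' t, δ t⟫ + ⟪u t, δ' t⟫) (Icc a b) :=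
    (hu'.inner hδc).add (huc.inner hδ')
  refine integral_eq_sub_of_hasDeriv_right_of_le hab (huc.inner hδc) (fun t ht => ?_)
    (hint.intervalIntegrable_of_Icc hab)
  have hmem : Icc a b ∈ 𝓝[>] t :=
    mem_of_superset (Ioo_mem_nhdsGT_of_mem ⟨ht.1.le, ht.2⟩) Ioo_subset_Icc_self
  rw [add_comm]
  exact ((hu t (Ioo_subset_Icc_self ht)).inner ℝ
    (hδ t (Ioo_subset_Icc_self ht))).mono_of_mem_nhdsWithin hmem

theorem eqOn_zero_of_integral_inner_self_eq_zero (hab : a < b) {g : ℝ → E}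
    (hg : ContinuousOn g (Icc a b)) (h : ∫ t in a..b, ⟪g t, g t⟫ = 0) :
    EqOn g 0 (Icc a b) := by
  have hae : (fun t => ⟪g t, g t⟫) =ᵐ[volume.restrict (Icc a b)] 0 := by
    rw [Measure.restrict_congr_set Ioc_ae_eq_Icc.symm]
    exact (integral_eq_zero_iff_of_le_of_nonneg_ae hab.le
      (ae_of_all _ fun _ => real_inner_self_nonneg)
      ((hg.inner hg).intervalIntegrable_of_Icc hab.le)).1 h
  exact fun t ht => inner_self_eq_zero.1
    (Measure.eqOn_Icc_of_ae_eq volume hab.ne hae (hg.inner hg) continuousOn_const ht)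

/-- **du Bois-Reymond lemma**. -/
theorem exists_eqOn_const_of_integral_inner_eq_zero [CompleteSpace E] (hab : a < b) {h : ℝ → E}
    (hh : ContinuousOn h (Icc a b))
    (horth : ∀ φ : ℝ → E, ContinuousOn φ (Icc a b) →
      ∫ t in a..b, φ t = 0 → ∫ t in a..b, ⟪h t, φ t⟫ = 0) :
    ∃ c : E, EqOn h (fun _ => c) (Icc a b) := by
  set c : E := (b - a)⁻¹ • ∫ t in a..b, h t
  have hφ : ContinuousOn (fun t => h t - c) (Icc a b) := hh.sub continuousOn_const
  have hφ0 : ∫ t in a..b, (h t - c) = 0 := by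
    rw [integral_sub (hh.intervalIntegrable_of_Icc hab.le) intervalIntegrable_const,
      intervalIntegral.integral_const, smul_smul, mul_inv_cancel₀ (sub_ne_zero.2 hab.ne'),
      one_smul, sub_self]
  have hc : ∫ t in a..b, ⟪c, h t - c⟫ = 0 := by
    have hcomm := (innerSL ℝ c).intervalIntegral_comp_comm (μ := volume)
      (hφ.intervalIntegrable_of_Icc hab.le)
    simp only [innerSL_apply_apply] at hcomm
    rw [hcomm, hφ0, inner_zero_right]
  refine ⟨c, fun t ht => sub_eq_zero.1 (eqOn_zero_of_integral_inner_self_eq_zero hab hφ ?_ ht)⟩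
  simp_rw [inner_sub_left]
  rw [integral_sub ((hh.inner hφ).intervalIntegrable_of_Icc hab.le)
    ((continuousOn_const.inner hφ).intervalIntegrable_of_Icc hab.le), horth _ hφ hφ0, hc,
    sub_self]

theorem hasDerivWithinAt_of_forall_integral_inner_add_inner_deriv_eq_zero [CompleteSpace E]
    (hab : a < b) {f p : ℝ → E} (hf : ContinuousOn f (Icc a b)) (hp : ContinuousOn p (Icc a b))
    (H : ∀ δq δq' : ℝ → E, (∀ t ∈ Icc a b, HasDerivWithinAt δq (δq' t) (Icc a b) t) →
      ContinuousOn δq' (Icc a b) → δq a = 0 → δq b = 0 →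
      ∫ t in a..b, (⟪f t, δq t⟫ + ⟪p t, δq' t⟫) = 0)
    {t : ℝ} (ht : t ∈ Icc a b) :
    HasDerivWithinAt p (f t) (Icc a b) t := by
  set P : ℝ → E := fun u => ∫ s in a..u, f s
  have hP : ∀ t ∈ Icc a b, HasDerivWithinAt P (f t) (Icc a b) t :=
    fun t ht => hf.hasDerivWithinAt_integral_Icc hab.le ht
  have hPc : ContinuousOn P (Icc a b) := fun t ht => (hP t ht).continuousWithinAt
  -- Testing against `δq = ∫ φ` and integrating `⟪f, δq⟫` by parts against `P` leaves `p - P ⊥ φ`.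
  have horth : ∀ φ : ℝ → E, ContinuousOn φ (Icc a b) → ∫ t in a..b, φ t = 0 →
      ∫ t in a..b, ⟪p t - P t, φ t⟫ = 0 := by
    intro φ hφ hφ0
    have hδq : ∀ t ∈ Icc a b, HasDerivWithinAt (fun u => ∫ s in a..u, φ s) (φ t) (Icc a b) t :=
      fun t ht => hφ.hasDerivWithinAt_integral_Icc hab.le ht
    have hδqc : ContinuousOn (fun u => ∫ s in a..u, φ s) (Icc a b) :=
      fun t ht => (hδq t ht).continuousWithinAt
    have hweak := H _ φ hδq hφ integral_same hφ0
    have hparts := integral_deriv_inner_eq_sub hab.le hP hf hδq hφ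
    rw [integral_same, hφ0, inner_zero_right, inner_zero_right, sub_self] at hparts
    have hint : ∀ g : ℝ → E, ContinuousOn g (Icc a b) →
        IntervalIntegrable (fun t => ⟪f t, ∫ s in a..t, φ s⟫ + ⟪g t, φ t⟫) volume a b :=
      fun g hg => ((hf.inner hδqc).add (hg.inner hφ)).intervalIntegrable_of_Icc hab.le
    calc ∫ t in a..b, ⟪p t - P t, φ t⟫
        = (∫ t in a..b, (⟪f t, ∫ s in a..t, φ s⟫ + ⟪p t, φ t⟫))
          - ∫ t in a..b, (⟪f t, ∫ s in a..t, φ s⟫ + ⟪P t, φ t⟫) := by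
          rw [← integral_sub (hint p hp) (hint P hPc)]
          congr 1 with t
          rw [inner_sub_left]
          ring
      _ = 0 := by rw [hweak, hparts, sub_self]
  obtain ⟨c, hc⟩ := exists_eqOn_const_of_integral_inner_eq_zero hab (hp.sub hPc) horth
  have hpP : EqOn p (fun u => c + P u) (Icc a b) := fun u hu => eq_add_of_sub_eq (hc hu)
  exact ((hP t ht).const_add c).congr hpP (hpP ht)

theorem forall_integral_inner_add_inner_deriv_eq_zero_iff [CompleteSpace E] (hab : a < b)
    {f p : ℝ → E} (hf : ContinuousOn f (Icc a b)) (hp : ContinuousOn p (Icc a b)) :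
    (∀ δq δq' : ℝ → E, (∀ t ∈ Icc a b, HasDerivWithinAt δq (δq' t) (Icc a b) t) →
      ContinuousOn δq' (Icc a b) → δq a = 0 → δq b = 0 →
      ∫ t in a..b, (⟪f t, δq t⟫ + ⟪p t, δq' t⟫) = 0) ↔
    ∀ t ∈ Icc a b, HasDerivWithinAt p (f t) (Icc a b) t := by
  refine ⟨fun H t ht => hasDerivWithinAt_of_forall_integral_inner_add_inner_deriv_eq_zero
    hab hf hp H ht, fun hpf δq δq' hδq hδq' ha hb => ?_⟩
  rw [integral_deriv_inner_eq_sub hab.le hpf hf hδq hδq', ha, hb, inner_zero_right,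
    inner_zero_right, sub_self]

theorem forall_integral_first_variation_eq_zero_iff [CompleteSpace E] (hab : a < b)
    {f p X q' v : ℝ → E} (hf : ContinuousOn f (Icc a b)) (hp : ContinuousOn p (Icc a b))
    (hX : ContinuousOn X (Icc a b)) (hq' : ContinuousOn q' (Icc a b))
    (hv : ContinuousOn v (Icc a b)) :
    (∀ δq δq' δv δp : ℝ → E, (∀ t ∈ Icc a b, HasDerivWithinAt δq (δq' t) (Icc a b) t) →
      ContinuousOn δq' (Icc a b) → δq a = 0 → δq b = 0 →
      ContinuousOn δv (Icc a b) → ContinuousOn δp (Icc a b) →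
      ∫ t in a..b, (⟪f t, δq t⟫ + ⟪p t, δq' t⟫ + ⟪X t - p t, δv t⟫ + ⟪δp t, q' t - v t⟫) = 0) ↔
    (∀ t ∈ Icc a b, q' t = v t) ∧ (∀ t ∈ Icc a b, p t = X t) ∧
      ∀ t ∈ Icc a b, HasDerivWithinAt p (f t) (Icc a b) t := by
  constructor
  · intro H
    have hzero : ∀ t ∈ Icc a b, HasDerivWithinAt (0 : ℝ → E) 0 (Icc a b) t :=
      fun t _ => hasDerivWithinAt_const t _ 0
    refine ⟨fun t ht => ?_, fun t ht => ?_, ?_⟩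
    · have h := H 0 0 0 (q' - v) hzero continuousOn_const rfl rfl continuousOn_const (hq'.sub hv)
      simp only [Pi.zero_apply, Pi.sub_apply, inner_zero_right, add_zero, zero_add] at h
      exact sub_eq_zero.1 (eqOn_zero_of_integral_inner_self_eq_zero hab (hq'.sub hv) h ht)
    · have h := H 0 0 (X - p) 0 hzero continuousOn_const rfl rfl (hX.sub hp) continuousOn_const
      simp only [Pi.zero_apply, Pi.sub_apply, inner_zero_right, inner_zero_left, add_zero,
        zero_add] at h
      exact (sub_eq_zero.1 (eqOn_zero_of_integral_inner_self_eq_zero hab (hX.sub hp) h ht)).symm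
    · refine (forall_integral_inner_add_inner_deriv_eq_zero_iff hab hf hp).1
        fun δq δq' hδq hδq' ha hb => ?_
      simpa using H δq δq' 0 0 hδq hδq' ha hb continuousOn_const continuousOn_const
  · rintro ⟨hqv, hpX, hpf⟩ δq δq' δv δp hδq hδq' ha hb - -
    rw [integral_congr (g := fun t => ⟪f t, δq t⟫ + ⟪p t, δq' t⟫) fun t ht => ?_]
    · exact (forall_integral_inner_add_inner_deriv_eq_zero_iff hab hf hp).2 hpf δq δq' hδq hδq'
        ha hb
    · rw [uIcc_of_le hab.le] at ht
      simp [hqv t ht, hpX t ht]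

end Variational

theorem hasDerivAt_intervalIntegral_of_continuousOn {E : Type*} [NormedAddCommGroup E]
    [NormedSpace ℝ E] {a b x₀ : ℝ} (hab : a ≤ b) {s : Set ℝ} (hs : s ∈ 𝓝 x₀)
    (hsc : IsCompact s) {F F' : ℝ → ℝ → E} (hF : ∀ x ∈ s, ContinuousOn (F x) (Icc a b))
    (hF' : ContinuousOn (fun z : ℝ × ℝ => F' z.1 z.2) (s ×ˢ Icc a b))
    (hderiv : ∀ t ∈ Icc a b, ∀ x ∈ s, HasDerivAt (fun x => F x t) (F' x t) x) :
    HasDerivAt (fun x => ∫ t in a..b, F x t) (∫ t in a..b, F' x₀ t) x₀ := by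
  have hsub : uIoc a b ⊆ Icc a b := by rw [uIoc_of_le hab]; exact Ioc_subset_Icc_self
  obtain ⟨C, hC⟩ := (hsc.prod isCompact_Icc).exists_bound_of_continuousOn hF'
  have hF'₀ : ContinuousOn (F' x₀) (Icc a b) :=
    hF'.comp (continuousOn_const.prodMk continuousOn_id) fun t ht => ⟨mem_of_mem_nhds hs, ht⟩
  exact (hasDerivAt_integral_of_dominated_loc_of_deriv_le hs
    (eventually_of_mem hs fun x hx => ((hF x hx).mono hsub).aestronglyMeasurable measurableSet_uIoc)
    ((hF x₀ (mem_of_mem_nhds hs)).intervalIntegrable_of_Icc hab)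
    ((hF'₀.mono hsub).aestronglyMeasurable measurableSet_uIoc)
    (ae_of_all _ fun t ht x hx => hC (x, t) ⟨hx, hsub ht⟩) intervalIntegrable_const
    (ae_of_all _ fun t ht x hx => hderiv t (hsub ht) x hx)).2

theorem hasDerivAt_HPaction_integrand {E : Type*} [NormedAddCommGroup E] [InnerProductSpace ℝ E]
    {L : E × E → ℝ} (hL : Differentiable ℝ L) {m : ℕ} {γ : ℕ → E → ℝ}
    (hγ : ∀ i < m, Differentiable ℝ (γ i)) (c : ℕ → ℝ) (x h y k z ζ y' h' : E) (ε : ℝ) :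
    HasDerivAt (fun ε : ℝ => L (x + ε • h, y + ε • k) + ∑ i ∈ Finset.range m, γ i (x + ε • h) * c i
        + ⟪z + ε • ζ, (y' + ε • h') - (y + ε • k)⟫)
      (fderiv ℝ L (x + ε • h, y + ε • k) (h, k)
        + ∑ i ∈ Finset.range m, fderiv ℝ (γ i) (x + ε • h) h * c i
        + (⟪z + ε • ζ, h' - k⟫ + ⟪ζ, (y' + ε • h') - (y + ε • k)⟫)) ε := by
  have hline : ∀ x h : E, HasDerivAt (fun ε : ℝ => x + ε • h) h ε :=
    fun x h => by simpa using ((hasDerivAt_id ε).smul_const h).const_add x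
  refine (((hL _).hasFDerivAt.comp_hasDerivAt ε ((hline x h).prodMk (hline y k))).add
    (HasDerivAt.fun_sum fun i hi => ?_)).add
    ((hline z ζ).inner ℝ ((hline y' h').sub (hline y k)))
  exact ((hγ i (Finset.mem_range.1 hi) _).hasFDerivAt.comp_hasDerivAt ε (hline x h)).mul_const _

section Action

variable {n m : ℕ} {a b : ℝ} {L : EuclideanSpace ℝ (Fin n) × EuclideanSpace ℝ (Fin n) → ℝ}
  {γ : ℕ → EuclideanSpace ℝ (Fin n) → ℝ} {w' : ℕ → ℝ → ℝ}
  {q q' v p δq δq' δv δp : ℝ → EuclideanSpace ℝ (Fin n)}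

theorem continuousOn_HPaction_integrand (hL : ContDiff ℝ 1 L)
    (hγ : ∀ i < m, ContDiff ℝ 1 (γ i)) (hw' : ∀ i < m, ContinuousOn (w' i) (Icc a b))
    (hq : ContinuousOn q (Icc a b)) (hq' : ContinuousOn q' (Icc a b))
    (hv : ContinuousOn v (Icc a b)) (hp : ContinuousOn p (Icc a b))
    (hδq : ContinuousOn δq (Icc a b)) (hδq' : ContinuousOn δq' (Icc a b))
    (hδv : ContinuousOn δv (Icc a b)) (hδp : ContinuousOn δp (Icc a b)) (ε : ℝ) :
    ContinuousOn (fun t => L (q t + ε • δq t, v t + ε • δv t)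
      + ∑ i ∈ Finset.range m, γ i (q t + ε • δq t) * w' i t
      + ⟪p t + ε • δp t, (q' t + ε • δq' t) - (v t + ε • δv t)⟫) (Icc a b) := by
  have hpert : ∀ {f g : ℝ → EuclideanSpace ℝ (Fin n)}, ContinuousOn f (Icc a b) →
      ContinuousOn g (Icc a b) → ContinuousOn (fun t => f t + ε • g t) (Icc a b) :=
    fun hf hg => hf.add (hg.const_smul ε)
  refine ((hL.continuous.comp_continuousOn ((hpert hq hδq).prodMk (hpert hv hδv))).add
    (continuousOn_finsetSum _ fun i hi => ?_)).add
    ((hpert hp hδp).inner ((hpert hq' hδq').sub (hpert hv hδv)))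
  have hi := Finset.mem_range.1 hi
  exact ((hγ i hi).continuous.comp_continuousOn (hpert hq hδq)).mul (hw' i hi)

theorem continuousOn_deriv_HPaction_integrand (s : Set ℝ) (hL : ContDiff ℝ 1 L)
    (hγ : ∀ i < m, ContDiff ℝ 1 (γ i)) (hw' : ∀ i < m, ContinuousOn (w' i) (Icc a b))
    (hq : ContinuousOn q (Icc a b)) (hq' : ContinuousOn q' (Icc a b))
    (hv : ContinuousOn v (Icc a b)) (hp : ContinuousOn p (Icc a b))
    (hδq : ContinuousOn δq (Icc a b)) (hδq' : ContinuousOn δq' (Icc a b))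
    (hδv : ContinuousOn δv (Icc a b)) (hδp : ContinuousOn δp (Icc a b)) :
    ContinuousOn (fun z : ℝ × ℝ =>
      fderiv ℝ L (q z.2 + z.1 • δq z.2, v z.2 + z.1 • δv z.2) (δq z.2, δv z.2)
        + ∑ i ∈ Finset.range m, fderiv ℝ (γ i) (q z.2 + z.1 • δq z.2) (δq z.2) * w' i z.2
        + (⟪p z.2 + z.1 • δp z.2, δq' z.2 - δv z.2⟫
          + ⟪δp z.2, (q' z.2 + z.1 • δq' z.2) - (v z.2 + z.1 • δv z.2)⟫)) (s ×ˢ Icc a b) := by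
  have hS : ∀ {X : Type} [TopologicalSpace X] {f : ℝ → X}, ContinuousOn f (Icc a b) →
      ContinuousOn (fun z : ℝ × ℝ => f z.2) (s ×ˢ Icc a b) :=
    fun hf => hf.comp continuousOn_snd fun _ hz => hz.2
  have hpert : ∀ {f g : ℝ → EuclideanSpace ℝ (Fin n)}, ContinuousOn f (Icc a b) →
      ContinuousOn g (Icc a b) →
      ContinuousOn (fun z : ℝ × ℝ => f z.2 + z.1 • g z.2) (s ×ˢ Icc a b) :=
    fun hf hg => (hS hf).add (continuousOn_fst.smul (hS hg))
  refine ((((hL.continuous_fderiv one_ne_zero).comp_continuousOn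
    ((hpert hq hδq).prodMk (hpert hv hδv))).clm_apply ((hS hδq).prodMk (hS hδv))).add
    (continuousOn_finsetSum _ fun i hi => ?_)).add
    (((hpert hp hδp).inner ((hS hδq').sub (hS hδv))).add
      ((hS hδp).inner ((hpert hq' hδq').sub (hpert hv hδv))))
  have hi := Finset.mem_range.1 hi
  exact ((((hγ i hi).continuous_fderiv one_ne_zero).comp_continuousOn
    (hpert hq hδq)).clm_apply (hS hδq)).mul (hS (hw' i hi))

theorem hasDerivAt_HPaction_fderiv (hab : a ≤ b) (hL : ContDiff ℝ 1 L)
    (hγ : ∀ i < m, ContDiff ℝ 1 (γ i)) (hw' : ∀ i < m, ContinuousOn (w' i) (Icc a b))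
    (hq : ContinuousOn q (Icc a b)) (hq' : ContinuousOn q' (Icc a b))
    (hv : ContinuousOn v (Icc a b)) (hp : ContinuousOn p (Icc a b))
    (hδq : ContinuousOn δq (Icc a b)) (hδq' : ContinuousOn δq' (Icc a b))
    (hδv : ContinuousOn δv (Icc a b)) (hδp : ContinuousOn δp (Icc a b)) :
    HasDerivAt (fun ε : ℝ => HPaction a b n m L γ w'
        (fun t => q t + ε • δq t) (fun t => q' t + ε • δq' t)
        (fun t => v t + ε • δv t) (fun t => p t + ε • δp t))
      (∫ t in a..b, (fderiv ℝ L (q t, v t) (δq t, δv t)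
        + ∑ i ∈ Finset.range m, fderiv ℝ (γ i) (q t) (δq t) * w' i t
        + (⟪p t, δq' t - δv t⟫ + ⟪δp t, q' t - v t⟫))) 0 := by
  have h := hasDerivAt_intervalIntegral_of_continuousOn hab
    (Metric.closedBall_mem_nhds 0 one_pos) (isCompact_closedBall 0 1)
    (fun ε _ => continuousOn_HPaction_integrand hL hγ hw' hq hq' hv hp hδq hδq' hδv hδp ε)
    (continuousOn_deriv_HPaction_integrand _ hL hγ hw' hq hq' hv hp hδq hδq' hδv hδp)
    fun t _ ε _ => hasDerivAt_HPaction_integrand (hL.differentiable one_ne_zero)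
      (fun i hi => (hγ i hi).differentiable one_ne_zero) (w' · t) _ _ _ _ _ _ _ _ ε
  simp only [zero_smul, add_zero] at h
  exact h

theorem hasDerivAt_HPaction (hab : a ≤ b) (hL : ContDiff ℝ 1 L)
    (hγ : ∀ i < m, ContDiff ℝ 1 (γ i)) (hw' : ∀ i < m, ContinuousOn (w' i) (Icc a b))
    (hq : ContinuousOn q (Icc a b)) (hq' : ContinuousOn q' (Icc a b))
    (hv : ContinuousOn v (Icc a b)) (hp : ContinuousOn p (Icc a b))
    (hδq : ContinuousOn δq (Icc a b)) (hδq' : ContinuousOn δq' (Icc a b))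
    (hδv : ContinuousOn δv (Icc a b)) (hδp : ContinuousOn δp (Icc a b)) :
    HasDerivAt (fun ε : ℝ => HPaction a b n m L γ w'
        (fun t => q t + ε • δq t) (fun t => q' t + ε • δq' t)
        (fun t => v t + ε • δv t) (fun t => p t + ε • δp t))
      (∫ t in a..b,
        (⟪gradient (fun x => L (x, v t)) (q t)
            + ∑ i ∈ Finset.range m, w' i t • gradient (γ i) (q t), δq t⟫
          + ⟪p t, δq' t⟫ + ⟪gradient (fun u => L (q t, u)) (v t) - p t, δv t⟫
          + ⟪δp t, q' t - v t⟫)) 0 := by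
  refine (hasDerivAt_HPaction_fderiv hab hL hγ hw' hq hq' hv hp hδq hδq' hδv hδp).congr_deriv
    (integral_congr fun t _ => ?_)
  rw [fderiv_apply_eq_inner_gradient_add_inner_gradient (hL.differentiable one_ne_zero _)]
  simp only [inner_add_left, sum_inner, real_inner_smul_left, inner_gradient_left,
    inner_sub_left, inner_sub_right, mul_comm (w' _ t)]
  ring

theorem continuousOn_sum_smul_gradient_comp {s : Set ℝ} (hγ : ∀ i < m, ContDiff ℝ 1 (γ i))
    (hw' : ∀ i < m, ContinuousOn (w' i) s) (hq : ContinuousOn q s) :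
    ContinuousOn (fun t => ∑ i ∈ Finset.range m, w' i t • gradient (γ i) (q t)) s :=
  continuousOn_finsetSum _ fun i hi => (hw' i (Finset.mem_range.1 hi)).smul
    ((hγ i (Finset.mem_range.1 hi)).continuous_gradient.comp_continuousOn hq)

theorem deriv_HPaction_add_integral_inner (hab : a ≤ b) (hL : ContDiff ℝ 1 L)
    (hγ : ∀ i < m, ContDiff ℝ 1 (γ i)) (hw' : ∀ i < m, ContinuousOn (w' i) (Icc a b))
    {G : ℝ → EuclideanSpace ℝ (Fin n)} (hG : ContinuousOn G (Icc a b))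
    (hq : ContinuousOn q (Icc a b)) (hq' : ContinuousOn q' (Icc a b))
    (hv : ContinuousOn v (Icc a b)) (hp : ContinuousOn p (Icc a b))
    (hδq : ContinuousOn δq (Icc a b)) (hδq' : ContinuousOn δq' (Icc a b))
    (hδv : ContinuousOn δv (Icc a b)) (hδp : ContinuousOn δp (Icc a b)) :
    deriv (fun ε : ℝ => HPaction a b n m L γ w'
        (fun t => q t + ε • δq t) (fun t => q' t + ε • δq' t)
        (fun t => v t + ε • δv t) (fun t => p t + ε • δp t)) 0
      + ∫ t in a..b, ⟪G t, δq t⟫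
    = ∫ t in a..b,
        (⟪gradient (fun x => L (x, v t)) (q t) + G t
            + ∑ i ∈ Finset.range m, w' i t • gradient (γ i) (q t), δq t⟫
          + ⟪p t, δq' t⟫ + ⟪gradient (fun u => L (q t, u)) (v t) - p t, δv t⟫
          + ⟪δp t, q' t - v t⟫) := by
  have hD : ContinuousOn (fun t => ⟪gradient (fun x => L (x, v t)) (q t)
        + ∑ i ∈ Finset.range m, w' i t • gradient (γ i) (q t), δq t⟫
      + ⟪p t, δq' t⟫ + ⟪gradient (fun u => L (q t, u)) (v t) - p t, δv t⟫
      + ⟪δp t, q' t - v t⟫) (Icc a b) :=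
    (((((hL.continuous_gradient_partial_fst.comp_continuousOn (hq.prodMk hv)).add
      (continuousOn_sum_smul_gradient_comp hγ hw' hq)).inner hδq).add (hp.inner hδq')).add
      (((hL.continuous_gradient_partial_snd.comp_continuousOn (hq.prodMk hv)).sub hp).inner
        hδv)).add (hδp.inner (hq'.sub hv))
  rw [(hasDerivAt_HPaction hab hL hγ hw' hq hq' hv hp hδq hδq' hδv hδp).deriv,
    ← integral_add (hD.intervalIntegrable_of_Icc hab)
      ((hG.inner hδq).intervalIntegrable_of_Icc hab)]
  congr 1 with t
  simp only [inner_add_left]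
  ring

end Action

theorem lagrange_dalembert_pontryagin_principle_general
    (a b : ℝ) (hab : a < b) (n m : ℕ)
    (L : EuclideanSpace ℝ (Fin n) × EuclideanSpace ℝ (Fin n) → ℝ)
    (hL : ContDiff ℝ 2 L)
    (γ : ℕ → EuclideanSpace ℝ (Fin n) → ℝ)
    (hγ : ∀ i < m, ContDiff ℝ 2 (γ i))
    (w' : ℕ → ℝ → ℝ)
    (hw' : ∀ i < m, ContinuousOn (w' i) (Set.Icc a b))
    (F : EuclideanSpace ℝ (Fin n) × EuclideanSpace ℝ (Fin n) →
      EuclideanSpace ℝ (Fin n))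
    (hF : Continuous F)
    (q q' v p : ℝ → EuclideanSpace ℝ (Fin n))
    (hq : ∀ t ∈ Set.Icc a b, HasDerivWithinAt q (q' t) (Set.Icc a b) t)
    (hq' : ContinuousOn q' (Set.Icc a b))
    (hv : ContinuousOn v (Set.Icc a b))
    (hp : ContinuousOn p (Set.Icc a b)) :
    (∀ δq δq' δv δp : ℝ → EuclideanSpace ℝ (Fin n),
        (∀ t ∈ Set.Icc a b, HasDerivWithinAt δq (δq' t) (Set.Icc a b) t) →
        ContinuousOn δq' (Set.Icc a b) →
        δq a = 0 → δq b = 0 →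
        ContinuousOn δv (Set.Icc a b) → ContinuousOn δp (Set.Icc a b) →
        deriv (fun ε : ℝ => HPaction a b n m L γ w'
            (fun t => q t + ε • δq t) (fun t => q' t + ε • δq' t)
            (fun t => v t + ε • δv t) (fun t => p t + ε • δp t)) 0
          + ∫ t in a..b, ⟪F (q t, v t), δq t⟫ = 0)
    ↔
    ((∀ t ∈ Set.Icc a b, q' t = v t) ∧
     (∀ t ∈ Set.Icc a b, p t = gradient (fun u => L (q t, u)) (v t)) ∧
     (∃ p' : ℝ → EuclideanSpace ℝ (Fin n),
        ContinuousOn p' (Set.Icc a b) ∧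
        (∀ t ∈ Set.Icc a b, HasDerivWithinAt p (p' t) (Set.Icc a b) t) ∧
        (∀ t ∈ Set.Icc a b,
          p' t = gradient (fun x => L (x, v t)) (q t) + F (q t, v t)
            + ∑ i ∈ Finset.range m, w' i t • gradient (γ i) (q t)))) := by
  have hqc : ContinuousOn q (Icc a b) := fun t ht => (hq t ht).continuousWithinAt
  have hL1 : ContDiff ℝ 1 L := hL.of_le one_le_two
  have hγ1 : ∀ i < m, ContDiff ℝ 1 (γ i) := fun i hi => (hγ i hi).of_le one_le_two
  have hFc : ContinuousOn (fun t => F (q t, v t)) (Icc a b) := hF.comp_continuousOn (hqc.prodMk hv)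
  have hf : ContinuousOn (fun t => gradient (fun x => L (x, v t)) (q t) + F (q t, v t)
      + ∑ i ∈ Finset.range m, w' i t • gradient (γ i) (q t)) (Icc a b) :=
    ((hL1.continuous_gradient_partial_fst.comp_continuousOn (hqc.prodMk hv)).add hFc).add
      (continuousOn_sum_smul_gradient_comp hγ1 hw' hqc)
  have hX : ContinuousOn (fun t => gradient (fun u => L (q t, u)) (v t)) (Icc a b) :=
    hL1.continuous_gradient_partial_snd.comp_continuousOn (hqc.prodMk hv)
  refine (forall₄_congr fun δq δq' δv δp => forall_congr' fun hδq => forall_congr' fun hδq' =>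
    imp_congr_right fun _ => imp_congr_right fun _ => forall_congr' fun hδv =>
      forall_congr' fun hδp => ?_).trans
    ((forall_integral_first_variation_eq_zero_iff hab hf hp hX hq' hv).trans
      (and_congr_right' (and_congr_right' ⟨fun h => ⟨_, hf, h, fun _ _ => rfl⟩,
        fun ⟨_, _, hp', hp'f⟩ t ht => (hp' t ht).congr_deriv (hp'f t ht)⟩)))
  rw [deriv_HPaction_add_integral_inner hab.le hL1 hγ1 hw' hFc hqc hq' hv hp
    (fun t ht => (hδq t ht).continuousWithinAt) hδq' hδv hδp]

/-- Pathwise Lagrange–d'Alembert–Pontryagin principle: a path `(q,v,p)`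
satisfies `d𝔊 + ∫ ⟨F(q,v), δq⟩ dt = 0` for every admissible variation iff
`q' = v`, `p = ∂L/∂v(q,v)`, and `p` is C¹ with
`p' = ∂L/∂q(q,v) + F(q,v) + ∑_i ∂γ_i/∂q(q) w_i'`. -/
theorem lagrange_dalembert_pontryagin_principle
    (a b : ℝ) (hab : a < b) (n m : ℕ) (hn : 1 ≤ n)
    (L : EuclideanSpace ℝ (Fin n) × EuclideanSpace ℝ (Fin n) → ℝ)
    (hL : ContDiff ℝ 2 L)
    (γ : ℕ → EuclideanSpace ℝ (Fin n) → ℝ)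
    (hγ : ∀ i < m, ContDiff ℝ 2 (γ i))
    (w w' : ℕ → ℝ → ℝ)
    (hw : ∀ i < m, ∀ t ∈ Set.Icc a b, HasDerivWithinAt (w i) (w' i t) (Set.Icc a b) t)
    (hw' : ∀ i < m, ContinuousOn (w' i) (Set.Icc a b))
    (F : EuclideanSpace ℝ (Fin n) × EuclideanSpace ℝ (Fin n) →
      EuclideanSpace ℝ (Fin n))
    (hF : Continuous F)
    (q₁ q₂ : EuclideanSpace ℝ (Fin n))
    (q q' v p : ℝ → EuclideanSpace ℝ (Fin n))
    (hq : ∀ t ∈ Set.Icc a b, HasDerivWithinAt q (q' t) (Set.Icc a b) t)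
    (hq' : ContinuousOn q' (Set.Icc a b))
    (hv : ContinuousOn v (Set.Icc a b))
    (hp : ContinuousOn p (Set.Icc a b))
    (hqa : q a = q₁) (hqb : q b = q₂) :
    (∀ δq δq' δv δp : ℝ → EuclideanSpace ℝ (Fin n),
        (∀ t ∈ Set.Icc a b, HasDerivWithinAt δq (δq' t) (Set.Icc a b) t) →
        ContinuousOn δq' (Set.Icc a b) →
        δq a = 0 → δq b = 0 →
        ContinuousOn δv (Set.Icc a b) → ContinuousOn δp (Set.Icc a b) →
        deriv (fun ε : ℝ => HPaction a b n m L γ w'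
            (fun t => q t + ε • δq t) (fun t => q' t + ε • δq' t)
            (fun t => v t + ε • δv t) (fun t => p t + ε • δp t)) 0
          + ∫ t in a..b, ⟪F (q t, v t), δq t⟫ = 0)
    ↔
    ((∀ t ∈ Set.Icc a b, q' t = v t) ∧
     (∀ t ∈ Set.Icc a b, p t = gradient (fun u => L (q t, u)) (v t)) ∧
     (∃ p' : ℝ → EuclideanSpace ℝ (Fin n),
        ContinuousOn p' (Set.Icc a b) ∧
        (∀ t ∈ Set.Icc a b, HasDerivWithinAt p (p' t) (Set.Icc a b) t) ∧
        (∀ t ∈ Set.Icc a b,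
          p' t = gradient (fun x => L (x, v t)) (q t) + F (q t, v t)
            + ∑ i ∈ Finset.range m, w' i t • gradient (γ i) (q t)))) :=
  lagrange_dalembert_pontryagin_principle_general a b hab n m L hL γ hγ w' hw' F hF q q' v p hq hq'
    hv hp
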